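/- A Whittaker module V over R(f) is irreducible if and only if its central annihilator Z_V ⊂ Z(R) is a maximal ideal, if and only if the space of Whittaker vectors in V is one-dimensional. -/

import Mathlib

open Polynomial

inductive SmithGen : Type
  | E | F | H

open SmithGen in
inductive SmithRel (f : ℂ[X]) : FreeAlgebra ℂ SmithGen → FreeAlgebra ℂ SmithGen → Prop
  | ef : SmithRel f (FreeAlgebra.ι ℂ E * FreeAlgebra.ι ℂ F - FreeAlgebra.ι ℂ F * FreeAlgebra.ι ℂ E)
      (aeval (FreeAlgebra.ι ℂ H) f)
  | he : SmithRel f (FreeAlgebra.ι ℂ H * FreeAlgebra.ι ℂ E - FreeAlgebra.ι ℂ E * FreeAlgebra.ι ℂ H)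
      (FreeAlgebra.ι ℂ E)
  | hf : SmithRel f (FreeAlgebra.ι ℂ H * FreeAlgebra.ι ℂ F - FreeAlgebra.ι ℂ F * FreeAlgebra.ι ℂ H)
      (-FreeAlgebra.ι ℂ F)

/-- Smith's algebra `R(f)`, similar to `U(sl₂)`. -/
abbrev SmithAlgebra (f : ℂ[X]) : Type := RingQuot (SmithRel f)

noncomputable def SmithE (f : ℂ[X]) : SmithAlgebra f :=
  RingQuot.mkAlgHom ℂ (SmithRel f) (FreeAlgebra.ι ℂ SmithGen.E)

noncomputable def SmithF (f : ℂ[X]) : SmithAlgebra f :=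
  RingQuot.mkAlgHom ℂ (SmithRel f) (FreeAlgebra.ι ℂ SmithGen.F)

noncomputable def SmithH (f : ℂ[X]) : SmithAlgebra f :=
  RingQuot.mkAlgHom ℂ (SmithRel f) (FreeAlgebra.ι ℂ SmithGen.H)

/-- The Casimir element `Ω = 2FE + u(H+1)`. -/
noncomputable def SmithOmega (f u : ℂ[X]) : SmithAlgebra f :=
  2 * SmithF f * SmithE f + aeval (SmithH f) (u.comp (X + 1))

/-- The action of the center `Z(R)` on an `R(f)`-module `V`, as a ring homomorphism
`Z(R) → End_{R(f)}(V)`; its kernel is `Z_V = Ann_{Z(R)}(V)`. -/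
noncomputable def smithCentralAction (f : ℂ[X]) (V : Type) [AddCommGroup V]
    [Module (SmithAlgebra f) V] :
    Subalgebra.center ℂ (SmithAlgebra f) →+* Module.End (SmithAlgebra f) V where
  toFun z :=
    { toFun := fun v => (z : SmithAlgebra f) • v
      map_add' := fun v₁ v₂ => smul_add _ _ _
      map_smul' := fun r v => by
        simp only [RingHom.id_apply]
        rw [smul_smul, smul_smul, Subalgebra.mem_center_iff.mp z.2 r] }
  map_one' := by ext v; exact one_smul _ _
  map_mul' z₁ z₂ := by ext v; exact mul_smul _ _ _
  map_zero' := by ext v; exact zero_smul _ _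
  map_add' z₁ z₂ := by ext v; exact add_smul _ _ _

/-!
Choose `u` with `u(X + 1) - u(X) = 2f`; then `Ω = 2FE + u(H + 1)` is central.
If `w ≠ 0` and `Ω w = λ w`, then `F w` is a polynomial in `H` applied to `w`, so `p ↦ p(H) w`
maps `ℂ[X]` onto `V`. Since `E p(H) w = c p(H - 1) w` and `p(X - 1) - p` has smaller degree than
`p`, every nonzero submodule contains `w`, the map is injective, and the Whittaker vectors are the
multiples of `w`; hence `V` is simple, its Whittaker space is `ℂ w`, and `Z(R)` acts through a
character whose kernel `Z_V` is maximal. Conversely, each of the three conditions forces `Ω` to act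
on `w` by a scalar: by Dixmier's lemma (a division algebra of countable dimension over `ℂ` is
`ℂ`) applied to `End_R(V)` or to the field `Z(R) / Z_V`, or because `Ω w` is again a Whittaker
vector.
-/

namespace Polynomial

theorem aeval_taylor {R A : Type*} [CommSemiring R] [Semiring A] [Algebra R A]
    (x : A) (r : R) (p : R[X]) : aeval x (taylor r p) = aeval (x + algebraMap R A r) p := by
  rw [taylor_apply, aeval_comp, map_add, aeval_X, aeval_C]

variable {K : Type*} [Field K] [CharZero K]

theorem exists_taylor_one_sub_eq (g : K[X]) : ∃ u : K[X], taylor 1 u - u = g := by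
  induction g using Polynomial.induction_on' with
  | add p q hp hq =>
    obtain ⟨u, rfl⟩ := hp
    obtain ⟨v, rfl⟩ := hq
    exact ⟨u + v, by rw [map_add]; abel⟩
  | monomial n a =>
    -- `B (X + 1) - B = (n + 1) X ^ n` for the Bernoulli polynomial `B = bernoulli (n + 1)`
    refine ⟨C (a / (n + 1)) * (bernoulli (n + 1)).map (algebraMap ℚ K), ?_⟩
    have hB := congrArg (map (algebraMap ℚ K)) (bernoulli_comp_one_add_X (n + 1))
    rw [map_comp, Polynomial.map_add, Polynomial.map_one, map_X, add_comm 1 X] at hB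
    have hn : (n + 1 : K) ≠ 0 := Nat.cast_add_one_ne_zero n
    rw [taylor_apply, mul_comp, C_comp, map_one, hB, ← mul_sub, nsmul_eq_mul, Polynomial.map_add,
      add_sub_cancel_left, Polynomial.map_mul, Polynomial.map_pow, map_X, Polynomial.map_natCast,
      add_tsub_cancel_right, ← mul_assoc, ← C_eq_natCast, ← C_mul, Nat.cast_add_one,
      div_mul_cancel₀ a hn, C_mul_X_pow_eq_monomial]

theorem natDegree_taylor_sub_lt {R : Type*} [CommRing R] {p : R[X]} (r : R)
    (h : taylor r p - p ≠ 0) : (taylor r p - p).natDegree < p.natDegree := by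
  have hp : taylor r p ≠ 0 := by rintro h0; simp_all
  have hdeg : (taylor r p - p).degree < (taylor r p).degree :=
    degree_sub_lt_left (by
      rw [degree_eq_natDegree hp, degree_eq_natDegree (by simpa using hp), natDegree_taylor])
      hp (leadingCoeff_taylor r p)
  simpa using natDegree_lt_natDegree h hdeg

theorem eq_C_of_taylor_eq {r : K} (hr : r ≠ 0) {p : K[X]} (h : taylor r p = p) :
    p = C (p.eval 0) := by
  have hper : ∀ n : ℕ, p.eval (n * r) = p.eval 0 := by
    intro n
    induction n with
    | zero => simp
    | succ n ih => rw [Nat.cast_succ, add_one_mul, ← ih, ← taylor_eval, h]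
  refine eq_of_infinite_eval_eq _ _
    (Set.infinite_of_injective_forall_mem (f := fun n : ℕ => n * r) ?_ ?_)
  · intro m n hmn
    simpa [hr] using hmn
  · intro n
    simp [hper n]

theorem one_mem_of_taylor_mem {r : K} (hr : r ≠ 0) {S : Submodule K K[X]}
    (hS : ∀ p ∈ S, taylor r p ∈ S) (hne : S ≠ ⊥) : (1 : K[X]) ∈ S := by
  obtain ⟨p, hpS, hp⟩ := Submodule.exists_mem_ne_zero_of_ne_bot hne
  induction hn : p.natDegree using Nat.strong_induction_on generalizing p with
  | _ n ih =>
    by_cases hconst : taylor r p - p = 0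
    · have hpC := eq_C_of_taylor_eq hr (sub_eq_zero.mp hconst)
      have ha : p.eval 0 ≠ 0 := fun h0 => hp (by rw [hpC, h0, C_0])
      have := S.smul_mem (p.eval 0)⁻¹ hpS
      rwa [hpC, smul_C, eval_C, smul_eq_mul, inv_mul_cancel₀ ha, C_1] at this
    · exact ih _ (hn ▸ natDegree_taylor_sub_lt r hconst) _ (S.sub_mem (hS p hpS) hpS) hconst rfl

end Polynomial

universe v

-- Mathlib's `Transcendental.linearIndependent_sub_inv` is stated for fields only.
theorem Transcendental.linearIndependent_sub_inv_of_divisionRing {F D : Type*} [Field F]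
    [DivisionRing D] [Algebra F D] {x : D} (H : Transcendental F x) :
    LinearIndependent F fun a : F => (x - algebraMap F D a)⁻¹ := by
  classical
  have hsub (a : F) : Polynomial.aeval x (X - C a) = x - algebraMap F D a := by simp
  have hne (a : F) : x - algebraMap F D a ≠ 0 := fun h =>
    X_sub_C_ne_zero a (transcendental_iff.mp H _ (by rw [hsub, h]))
  refine linearIndependent_iff'.2 fun s g hg i hi => ?_
  have hcancel : ∀ a ∈ s,
      (x - algebraMap F D a)⁻¹ * Polynomial.aeval x (∏ b ∈ s, (X - C b)) =
        Polynomial.aeval x (∏ b ∈ s.erase a, (X - C b)) := fun a ha => by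
    rw [← s.mul_prod_erase _ ha, map_mul, hsub, inv_mul_cancel_left₀ (hne a)]
  have hpoly : ∑ a ∈ s, g a • ∏ b ∈ s.erase a, (X - C b) = 0 := by
    refine transcendental_iff.mp H _ ?_
    rw [map_sum, ← zero_mul (Polynomial.aeval x (∏ b ∈ s, (X - C b))), ← hg, Finset.sum_mul]
    refine Finset.sum_congr rfl fun a ha => ?_
    rw [map_smul, ← hcancel a ha, smul_mul_assoc]
  have heval := congrArg (eval i) hpoly
  rw [eval_finsetSum, Finset.sum_eq_single i (fun a ha hai => ?_) (absurd hi), eval_smul,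
    eval_prod, smul_eq_mul, eval_zero] at heval
  · refine (mul_eq_zero.mp heval).resolve_right (Finset.prod_ne_zero_iff.mpr fun b hb => ?_)
    simpa [sub_eq_zero] using (Finset.ne_of_mem_erase hb).symm
  · rw [eval_smul, eval_prod, Finset.prod_eq_zero (Finset.mem_erase.mpr ⟨Ne.symm hai, hi⟩)
      (by simp), smul_zero]

theorem IsAlgClosed.algebraMap_surjective_of_rank_lt_card {F D : Type v} [Field F]
    [IsAlgClosed F] [DivisionRing D] [Algebra F D] (h : Module.rank F D < Cardinal.mk F) :
    Function.Surjective (algebraMap F D) := by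
  intro x
  by_cases hx : IsAlgebraic F x
  · exact minpoly.mem_range_of_degree_eq_one F x
      (IsAlgClosed.degree_eq_one_of_irreducible F (minpoly.irreducible hx.isIntegral))
  · exact absurd h (not_lt.mpr
      (Transcendental.linearIndependent_sub_inv_of_divisionRing hx).cardinal_le_rank)

theorem Ideal.isMaximal_of_forall_exists_sub_algebraMap_mem {K A : Type*} [Field K] [CommRing A]
    [Algebra K A] {I : Ideal A} (hI : I ≠ ⊤)
    (h : ∀ z, ∃ a : K, z - algebraMap K A a ∈ I) : I.IsMaximal := by
  refine ⟨⟨hI, fun J hIJ => ?_⟩⟩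
  obtain ⟨x, hxJ, hxI⟩ := SetLike.exists_of_lt hIJ
  obtain ⟨a, ha⟩ := h x
  have ha0 : a ≠ 0 := by
    rintro rfl
    exact hxI (by simpa using ha)
  have haJ : algebraMap K A a ∈ J := by simpa using J.sub_mem hxJ (hIJ.le ha)
  exact J.eq_top_of_isUnit_mem haJ ((IsUnit.mk0 a ha0).map _)

theorem SemiconjBy.aeval {R A : Type*} [CommSemiring R] [Semiring A] [Algebra R A] {a x y : A}
    (h : SemiconjBy a x y) (p : R[X]) : SemiconjBy a (aeval x p) (aeval y p) := by
  induction p using Polynomial.induction_on' with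
  | add p q hp hq => simpa only [map_add] using hp.add_right hq
  | monomial n r =>
    simpa only [aeval_monomial] using
      SemiconjBy.mul_right (Algebra.commute_algebraMap_right r a) (h.pow_right n)

namespace SmithAlgebra

section Relations

variable (f : ℂ[X])

theorem adjoin_E_F_H_eq_top : Algebra.adjoin ℂ {SmithE f, SmithF f, SmithH f} = ⊤ := by
  have hrange : Set.range (RingQuot.mkAlgHom ℂ (SmithRel f) ∘ FreeAlgebra.ι ℂ) =
      {SmithE f, SmithF f, SmithH f} := by
    ext x
    constructor
    · rintro ⟨(_ | _ | _), rfl⟩ <;> simp [SmithE, SmithF, SmithH]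
    · rintro (rfl | rfl | rfl)
      exacts [⟨.E, rfl⟩, ⟨.F, rfl⟩, ⟨.H, rfl⟩]
  rw [← hrange, Set.range_comp, Algebra.adjoin_image, FreeAlgebra.adjoin_range_ι,
    Algebra.map_top, AlgHom.range_eq_top]
  exact RingQuot.mkAlgHom_surjective ℂ (SmithRel f)

theorem E_mul_F_sub_F_mul_E : SmithE f * SmithF f - SmithF f * SmithE f = aeval (SmithH f) f := by
  have h := RingQuot.mkAlgHom_rel ℂ (SmithRel.ef (f := f))
  simp only [map_sub, map_mul, ← aeval_algHom_apply] at h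
  exact h

theorem H_mul_E_sub_E_mul_H : SmithH f * SmithE f - SmithE f * SmithH f = SmithE f := by
  have h := RingQuot.mkAlgHom_rel ℂ (SmithRel.he (f := f))
  simp only [map_sub, map_mul] at h
  exact h

theorem H_mul_F_sub_F_mul_H : SmithH f * SmithF f - SmithF f * SmithH f = -SmithF f := by
  have h := RingQuot.mkAlgHom_rel ℂ (SmithRel.hf (f := f))
  simp only [map_sub, map_mul, map_neg] at h
  exact h

theorem semiconjBy_E_H : SemiconjBy (SmithE f) (SmithH f) (SmithH f - 1) := by
  have h := sub_eq_iff_eq_add.mp (H_mul_E_sub_E_mul_H f)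
  rw [SemiconjBy, sub_mul, one_mul, h]
  abel

theorem semiconjBy_F_H : SemiconjBy (SmithF f) (SmithH f) (SmithH f + 1) := by
  have h := sub_eq_iff_eq_add.mp (H_mul_F_sub_F_mul_H f)
  rw [SemiconjBy, add_mul, one_mul, h]
  abel

theorem E_mul_aeval_H (p : ℂ[X]) :
    SmithE f * aeval (SmithH f) p = aeval (SmithH f) (taylor (-1) p) * SmithE f := by
  rw [aeval_taylor, map_neg, map_one, ← sub_eq_add_neg]
  exact (semiconjBy_E_H f).aeval p

theorem F_mul_aeval_H (p : ℂ[X]) :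
    SmithF f * aeval (SmithH f) p = aeval (SmithH f) (taylor 1 p) * SmithF f := by
  rw [aeval_taylor, map_one]
  exact (semiconjBy_F_H f).aeval p

theorem smithOmega_eq (u : ℂ[X]) :
    SmithOmega f u = 2 * SmithF f * SmithE f + aeval (SmithH f) (taylor 1 u) := by
  rw [SmithOmega, taylor_apply, map_one]

theorem commute_smithOmega_E {u : ℂ[X]} (hu : taylor 1 u - u = 2 * f) :
    Commute (SmithOmega f u) (SmithE f) := by
  have hshift : aeval (SmithH f) (taylor 1 u) = aeval (SmithH f) u + 2 * aeval (SmithH f) f := by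
    rw [← sub_eq_iff_eq_add', ← map_sub, hu, map_mul, map_ofNat]
  rw [Commute, SemiconjBy, smithOmega_eq, mul_add, add_mul, E_mul_aeval_H, taylor_taylor,
    neg_add_cancel, taylor_zero, hshift,
    show SmithE f * (2 * SmithF f * SmithE f) = 2 * (SmithE f * SmithF f) * SmithE f by
      noncomm_ring, sub_eq_iff_eq_add.mp (E_mul_F_sub_F_mul_E f)]
  noncomm_ring

theorem commute_smithOmega_F {u : ℂ[X]} (hu : taylor 1 u - u = 2 * f) :
    Commute (SmithOmega f u) (SmithF f) := by
  have hshift : aeval (SmithH f) (taylor 1 (taylor 1 u)) =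
      aeval (SmithH f) (taylor 1 u) + 2 * aeval (SmithH f) (taylor 1 f) := by
    rw [← sub_eq_iff_eq_add', ← map_sub, ← map_sub, hu, taylor_mul,
      show (2 : ℂ[X]) = C 2 from rfl, taylor_C, map_mul, aeval_C, map_ofNat]
  rw [Commute, SemiconjBy, smithOmega_eq, mul_add, add_mul, F_mul_aeval_H, hshift, add_mul,
    mul_assoc 2 (aeval (SmithH f) (taylor 1 f)), ← F_mul_aeval_H f f,
    show 2 * SmithF f * SmithE f * SmithF f = 2 * SmithF f * (SmithE f * SmithF f) by
      noncomm_ring, sub_eq_iff_eq_add.mp (E_mul_F_sub_F_mul_E f)]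
  noncomm_ring

theorem commute_smithOmega_H (u : ℂ[X]) : Commute (SmithOmega f u) (SmithH f) := by
  have hFE : Commute (SmithF f * SmithE f) (SmithH f) := by
    rw [Commute, SemiconjBy, mul_assoc, (semiconjBy_E_H f).eq, ← mul_assoc, mul_sub,
      (semiconjBy_F_H f).eq, mul_one, add_mul, one_mul, add_sub_cancel_right, mul_assoc]
  rw [smithOmega_eq, mul_assoc]
  exact ((Commute.ofNat_left 2 _).mul_left hFE).add_left
    ((Commute.refl (SmithH f)).aeval (R := ℂ) _).symm

theorem smithOmega_mem_center {u : ℂ[X]} (hu : taylor 1 u - u = 2 * f) :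
    SmithOmega f u ∈ Subalgebra.center ℂ (SmithAlgebra f) := by
  refine Subalgebra.mem_center_iff.mpr fun b =>
    (Algebra.commute_of_mem_adjoin_of_forall_mem_commute (R := ℂ)
      (s := {SmithE f, SmithF f, SmithH f}) ?_ ?_).eq.symm
  · rw [adjoin_E_F_H_eq_top]; trivial
  · rintro _ (rfl | rfl | rfl)
    exacts [commute_smithOmega_E f hu, commute_smithOmega_F f hu, commute_smithOmega_H f u]

theorem rank_le_aleph0 : Module.rank ℂ (SmithAlgebra f) ≤ Cardinal.aleph0 := by
  calc Module.rank ℂ (SmithAlgebra f) ≤ Module.rank ℂ (FreeAlgebra ℂ SmithGen) :=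
        LinearMap.rank_le_of_surjective (RingQuot.mkAlgHom ℂ (SmithRel f)).toLinearMap
          (RingQuot.mkAlgHom_surjective ℂ (SmithRel f))
    _ ≤ Cardinal.aleph0 := by
        have : Countable SmithGen := Function.Injective.countable (f := SmithGen.ctorIdx)
          (by rintro (_ | _ | _) (_ | _ | _) h <;> first | rfl | exact absurd h (by decide))
        rw [FreeAlgebra.rank_eq, Cardinal.lift_id]
        exact Cardinal.mk_le_aleph0

end Relations

def IsWhittakerVector (f : ℂ[X]) {V : Type*} [AddCommGroup V] [Module (SmithAlgebra f) V]
    (c : ℂ) (v : V) : Prop :=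
  SmithE f • v = algebraMap ℂ (SmithAlgebra f) c • v

section CyclicModule

variable {f : ℂ[X]} {V : Type} [AddCommGroup V] [Module (SmithAlgebra f) V] {w : V}

theorem smithCentralAction_apply (z : Subalgebra.center ℂ (SmithAlgebra f)) (v : V) :
    smithCentralAction f V z v = (z : SmithAlgebra f) • v := rfl

variable (hcyc : ∀ v : V, ∃ r : SmithAlgebra f, v = r • w)
include hcyc

theorem smithCentralAction_eq_zero_iff {z : Subalgebra.center ℂ (SmithAlgebra f)} :
    smithCentralAction f V z = 0 ↔ (z : SmithAlgebra f) • w = 0 := by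
  refine ⟨fun h => by rw [← smithCentralAction_apply, h, LinearMap.zero_apply], fun h => ?_⟩
  ext v
  obtain ⟨r, rfl⟩ := hcyc v
  rw [smithCentralAction_apply, ← mul_smul, ← Subalgebra.mem_center_iff.mp z.2, mul_smul, h,
    smul_zero, LinearMap.zero_apply]

theorem ker_smithCentralAction_ne_top_iff :
    RingHom.ker (smithCentralAction f V) ≠ ⊤ ↔ w ≠ 0 := by
  rw [Ne, Ideal.eq_top_iff_one, RingHom.mem_ker, smithCentralAction_eq_zero_iff hcyc,
    OneMemClass.coe_one, one_smul]

theorem ne_zero_of_nontrivial [Nontrivial V] : w ≠ 0 := by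
  rintro rfl
  obtain ⟨v, hv⟩ := exists_ne (0 : V)
  obtain ⟨r, rfl⟩ := hcyc v
  exact hv (smul_zero r)

end CyclicModule

section WhittakerModule

variable {f : ℂ[X]} {c : ℂ} {V : Type} [AddCommGroup V] [Module (SmithAlgebra f) V]
  [Module ℂ V] [IsScalarTower ℂ (SmithAlgebra f) V]

theorem isWhittakerVector_smul {z : SmithAlgebra f}
    (hz : z ∈ Subalgebra.center ℂ (SmithAlgebra f)) {v : V} (hv : IsWhittakerVector f c v) : IsWhittakerVector f c (z • v) := by
  rw [IsWhittakerVector, ← mul_smul, Subalgebra.mem_center_iff.mp hz, mul_smul, hv,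
    algebraMap_smul, algebraMap_smul, smul_comm]

variable (f) in
noncomputable def aevalHSmul (w : V) : ℂ[X] →ₗ[ℂ] V :=
  ((LinearMap.toSpanSingleton (SmithAlgebra f) V w).restrictScalars ℂ).comp
    (aeval (SmithH f)).toLinearMap

theorem aevalHSmul_apply (w : V) (p : ℂ[X]) : aevalHSmul f w p = aeval (SmithH f) p • w := rfl

variable {w : V}

theorem E_smul_aevalHSmul (hw : IsWhittakerVector f c w) (p : ℂ[X]) :
    SmithE f • aevalHSmul f w p = c • aevalHSmul f w (taylor (-1) p) := by
  rw [aevalHSmul_apply, ← mul_smul, E_mul_aeval_H, mul_smul, hw, algebraMap_smul, smul_comm,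
    aevalHSmul_apply]

theorem H_smul_aevalHSmul (p : ℂ[X]) :
    SmithH f • aevalHSmul f w p = aevalHSmul f w (X * p) := by
  rw [aevalHSmul_apply, aevalHSmul_apply, ← mul_smul, map_mul, aeval_X]

theorem mem_of_comap_aevalHSmul_ne_bot (hc : c ≠ 0) (hw : IsWhittakerVector f c w)
    {M : Submodule (SmithAlgebra f) V}
    (hM : (M.restrictScalars ℂ).comap (aevalHSmul f w) ≠ ⊥) : w ∈ M := by
  have hstable : ∀ p ∈ (M.restrictScalars ℂ).comap (aevalHSmul f w),
      taylor (-1) p ∈ (M.restrictScalars ℂ).comap (aevalHSmul f w) := by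
    intro p hp
    have hE := M.smul_mem (SmithE f) hp
    rw [E_smul_aevalHSmul hw] at hE
    exact (Submodule.smul_mem_iff (M.restrictScalars ℂ) hc).mp hE
  simpa [aevalHSmul_apply] using one_mem_of_taylor_mem (neg_ne_zero.mpr one_ne_zero) hstable hM

theorem aevalHSmul_injective (hc : c ≠ 0) (hw : IsWhittakerVector f c w) (hw0 : w ≠ 0) :
    Function.Injective (aevalHSmul f w) := by
  rw [← LinearMap.ker_eq_bot]
  by_contra hker
  exact hw0 (by simpa using mem_of_comap_aevalHSmul_ne_bot hc hw (M := ⊥) hker)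

section Eigen

variable {u : ℂ[X]} {lam : ℂ} (hc : c ≠ 0) (hw : IsWhittakerVector f c w)
  (hΩ : SmithOmega f u • w = lam • w)
include hc hw hΩ

theorem F_smul_eq_aevalHSmul :
    SmithF f • w = aevalHSmul f w ((2 * c)⁻¹ • (C lam - taylor 1 u)) := by
  have h2 : (2 : SmithAlgebra f) = algebraMap ℂ (SmithAlgebra f) 2 := (map_ofNat _ 2).symm
  have hΩ' : (2 * c) • SmithF f • w = lam • w - aevalHSmul f w (taylor 1 u) := by
    rw [eq_sub_iff_add_eq, ← hΩ, smithOmega_eq, add_smul, aevalHSmul_apply, mul_assoc,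
      mul_smul (2 : SmithAlgebra f), mul_smul (SmithF f), hw, h2, algebraMap_smul,
      algebraMap_smul, smul_comm (SmithF f) c w, smul_smul]
  rw [map_smul, map_sub, aevalHSmul_apply, aeval_C, algebraMap_smul, ← hΩ', inv_smul_smul₀]
  exact mul_ne_zero two_ne_zero hc

theorem F_smul_aevalHSmul (p : ℂ[X]) :
    SmithF f • aevalHSmul f w p =
      aevalHSmul f w (taylor 1 p * ((2 * c)⁻¹ • (C lam - taylor 1 u))) := by
  rw [aevalHSmul_apply, ← mul_smul, F_mul_aeval_H, mul_smul, F_smul_eq_aevalHSmul hc hw hΩ,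
    aevalHSmul_apply, aevalHSmul_apply, ← mul_smul, map_mul]

theorem aevalHSmul_surjective (hcyc : ∀ v : V, ∃ r : SmithAlgebra f, v = r • w) :
    Function.Surjective (aevalHSmul f w) := by
  have hstable : ∀ r : SmithAlgebra f, ∀ v ∈ LinearMap.range (aevalHSmul f w),
      r • v ∈ LinearMap.range (aevalHSmul f w) := by
    intro r
    have hr : r ∈ Algebra.adjoin ℂ {SmithE f, SmithF f, SmithH f} := by
      rw [adjoin_E_F_H_eq_top]; trivial
    induction hr using Algebra.adjoin_induction with
    | mem x hx =>
      rintro _ ⟨p, rfl⟩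
      rcases hx with rfl | rfl | rfl
      · exact ⟨c • taylor (-1) p, by rw [map_smul, E_smul_aevalHSmul hw]⟩
      · exact ⟨_, (F_smul_aevalHSmul hc hw hΩ p).symm⟩
      · exact ⟨_, (H_smul_aevalHSmul p).symm⟩
    | algebraMap a =>
      intro v hv
      rw [algebraMap_smul]
      exact Submodule.smul_mem _ a hv
    | add x y _ _ hx hy => exact fun v hv => by rw [add_smul]; exact add_mem (hx v hv) (hy v hv)
    | mul x y _ _ hx hy => exact fun v hv => by rw [mul_smul]; exact hx _ (hy v hv)
  intro v
  obtain ⟨r, rfl⟩ := hcyc v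
  exact hstable r w ⟨1, by rw [aevalHSmul_apply, map_one, one_smul]⟩

variable (hcyc : ∀ v : V, ∃ r : SmithAlgebra f, v = r • w)
include hcyc

theorem exists_eq_smul_of_isWhittakerVector (hw0 : w ≠ 0) {v : V}
    (hv : IsWhittakerVector f c v) : ∃ a : ℂ, v = a • w := by
  obtain ⟨p, rfl⟩ := aevalHSmul_surjective hc hw hΩ hcyc v
  have hp : taylor (-1) p = p := by
    refine aevalHSmul_injective hc hw hw0 (smul_right_injective V hc ?_)
    dsimp only
    rw [← E_smul_aevalHSmul hw, hv, algebraMap_smul]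
  refine ⟨p.eval 0, ?_⟩
  rw [eq_C_of_taylor_eq (neg_ne_zero.mpr one_ne_zero) hp, aevalHSmul_apply, aeval_C,
    algebraMap_smul, eval_C]

theorem eq_top_of_ne_bot {M : Submodule (SmithAlgebra f) V} (hM : M ≠ ⊥) : M = ⊤ := by
  obtain ⟨v, hvM, hv0⟩ := Submodule.exists_mem_ne_zero_of_ne_bot hM
  obtain ⟨p, rfl⟩ := aevalHSmul_surjective hc hw hΩ hcyc v
  have hwM : w ∈ M := mem_of_comap_aevalHSmul_ne_bot hc hw
    ((Submodule.ne_bot_iff _).mpr ⟨p, hvM, by rintro rfl; exact hv0 (map_zero _)⟩)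
  rw [Submodule.eq_top_iff']
  intro v
  obtain ⟨r, rfl⟩ := hcyc v
  exact M.smul_mem r hwM

theorem isSimpleModule (hw0 : w ≠ 0) : IsSimpleModule (SmithAlgebra f) V :=
  haveI : Nontrivial V := ⟨⟨w, 0, hw0⟩⟩
  (isSimpleModule_iff _ _).mpr
    ⟨fun _ => or_iff_not_imp_left.mpr (eq_top_of_ne_bot hc hw hΩ hcyc)⟩

end Eigen

theorem exists_smul_smithOmega_of_forall_isWhittakerVector {u : ℂ[X]}
    (hu : taylor 1 u - u = 2 * f) {v₀ : V} (hw : IsWhittakerVector f c w) (hw0 : w ≠ 0)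
    (hspan : ∀ v : V, IsWhittakerVector f c v → ∃ a : ℂ, v = a • v₀) :
    ∃ lam : ℂ, SmithOmega f u • w = lam • w := by
  obtain ⟨b, hb⟩ := hspan w hw
  obtain ⟨a, ha⟩ := hspan _ (isWhittakerVector_smul (smithOmega_mem_center f hu) hw)
  have hb0 : b ≠ 0 := by
    rintro rfl
    exact hw0 (by rw [hb, zero_smul])
  exact ⟨a / b, by rw [ha, hb, smul_smul, div_mul_cancel₀ a hb0]⟩

variable (hcyc : ∀ v : V, ∃ r : SmithAlgebra f, v = r • w)
include hcyc

theorem rank_le_aleph0_of_cyclic : Module.rank ℂ V ≤ Cardinal.aleph0 :=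
  (LinearMap.rank_le_of_surjective
    ((LinearMap.toSpanSingleton (SmithAlgebra f) V w).restrictScalars ℂ)
    fun v => (hcyc v).imp fun _ h => h.symm).trans (rank_le_aleph0 f)

theorem isMaximal_ker_smithCentralAction {u : ℂ[X]} {lam : ℂ} (hc : c ≠ 0)
    (hw : IsWhittakerVector f c w) (hΩ : SmithOmega f u • w = lam • w) (hw0 : w ≠ 0) :
    (RingHom.ker (smithCentralAction f V)).IsMaximal := by
  refine Ideal.isMaximal_of_forall_exists_sub_algebraMap_mem (K := ℂ)
    (A := Subalgebra.center ℂ (SmithAlgebra f)) ?_ fun z => ?_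
  · exact (ker_smithCentralAction_ne_top_iff hcyc).mpr hw0
  · obtain ⟨a, ha⟩ := exists_eq_smul_of_isWhittakerVector hc hw hΩ hcyc hw0
      (isWhittakerVector_smul z.2 hw)
    refine ⟨a, ?_⟩
    rw [RingHom.mem_ker, smithCentralAction_eq_zero_iff hcyc]
    change ((z : SmithAlgebra f) - algebraMap ℂ (SmithAlgebra f) a) • w = 0
    rw [sub_smul, ha, algebraMap_smul, sub_self]

theorem exists_smul_smithOmega_of_isSimpleModule {u : ℂ[X]} (hu : taylor 1 u - u = 2 * f)
    [IsSimpleModule (SmithAlgebra f) V] : ∃ lam : ℂ, SmithOmega f u • w = lam • w := by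
  classical
  let evalAt : Module.End (SmithAlgebra f) V →ₗ[ℂ] V :=
    { toFun := fun φ => φ w, map_add' := fun _ _ => rfl, map_smul' := fun _ _ => rfl }
  have hinj : Function.Injective evalAt := fun φ ψ h => LinearMap.ext fun v => by
    obtain ⟨r, rfl⟩ := hcyc v
    simp only [map_smul]
    congr 1
  have hrank : Module.rank ℂ (Module.End (SmithAlgebra f) V) < Cardinal.mk ℂ := by
    calc _ ≤ Module.rank ℂ V := LinearMap.rank_le_of_injective evalAt hinj
      _ ≤ Cardinal.aleph0 := rank_le_aleph0_of_cyclic hcyc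
      _ < Cardinal.mk ℂ := Cardinal.mk_complex ▸ Cardinal.aleph0_lt_continuum
  obtain ⟨lam, hlam⟩ := IsAlgClosed.algebraMap_surjective_of_rank_lt_card hrank
    (smithCentralAction f V ⟨_, smithOmega_mem_center f hu⟩)
  have hΩ := LinearMap.congr_fun hlam w
  rw [Module.algebraMap_end_apply] at hΩ
  exact ⟨lam, hΩ.symm⟩

theorem exists_smul_smithOmega_of_isMaximal {u : ℂ[X]} (hu : taylor 1 u - u = 2 * f)
    (hmax : (RingHom.ker (smithCentralAction f V)).IsMaximal) :
    ∃ lam : ℂ, SmithOmega f u • w = lam • w := by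
  -- `RingHom.ker` lives over the `Semiring` structure of the subalgebra; `Ideal.Quotient` needs
  -- the ideal stated over its `CommRing` structure.
  let I : @Ideal (Subalgebra.center ℂ (SmithAlgebra f)) (CommRing.toCommSemiring).toSemiring :=
    RingHom.ker (smithCentralAction f V)
  have : I.IsMaximal := hmax
  let := Ideal.Quotient.field (R := Subalgebra.center ℂ (SmithAlgebra f)) I
  have hrank : Module.rank ℂ (Subalgebra.center ℂ (SmithAlgebra f) ⧸ I) < Cardinal.mk ℂ :=
    calc _ ≤ Module.rank ℂ (Subalgebra.center ℂ (SmithAlgebra f)) :=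
          LinearMap.rank_le_of_surjective (Ideal.Quotient.mkₐ ℂ I).toLinearMap
            (Ideal.Quotient.mkₐ_surjective ℂ I)
      _ ≤ Module.rank ℂ (SmithAlgebra f) :=
          LinearMap.rank_le_of_injective (Subalgebra.center ℂ (SmithAlgebra f)).val.toLinearMap
            Subtype.val_injective
      _ ≤ Cardinal.aleph0 := rank_le_aleph0 f
      _ < Cardinal.mk ℂ := Cardinal.mk_complex ▸ Cardinal.aleph0_lt_continuum
  obtain ⟨lam, hlam⟩ := IsAlgClosed.algebraMap_surjective_of_rank_lt_card hrank
    (Ideal.Quotient.mk I ⟨_, smithOmega_mem_center f hu⟩)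
  have hmem : ⟨_, smithOmega_mem_center f hu⟩ - algebraMap ℂ _ lam ∈ I :=
    Ideal.Quotient.eq.mp (hlam.symm.trans (Ideal.Quotient.mk_algebraMap ℂ (I := I) lam).symm)
  rw [show I = RingHom.ker (smithCentralAction f V) from rfl, RingHom.mem_ker,
    smithCentralAction_eq_zero_iff hcyc] at hmem
  refine ⟨lam, ?_⟩
  simpa [sub_smul, sub_eq_zero] using hmem

end WhittakerModule

end SmithAlgebra

open SmithAlgebra

/-- A Whittaker module `V = R·w` is irreducible iff its central annihilator
`Z_V ⊆ Z(R)` is a maximal ideal, iff the space of Whittaker vectors in `V` is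
one-dimensional. -/
theorem smith_whittaker_irreducibility (f : ℂ[X]) (c : ℂ) (hc : c ≠ 0)
    (V : Type) [AddCommGroup V] [Module (SmithAlgebra f) V]
    [Module ℂ V] [IsScalarTower ℂ (SmithAlgebra f) V] (w : V)
    (hw : SmithE f • w = algebraMap ℂ (SmithAlgebra f) c • w)
    (hcyc : ∀ v : V, ∃ r : SmithAlgebra f, v = r • w) :
    (IsSimpleModule (SmithAlgebra f) V ↔ (RingHom.ker (smithCentralAction f V)).IsMaximal) ∧
    (IsSimpleModule (SmithAlgebra f) V ↔
      ∃ v₀ : V, v₀ ≠ 0 ∧ SmithE f • v₀ = algebraMap ℂ (SmithAlgebra f) c • v₀ ∧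
        ∀ v : V, SmithE f • v = algebraMap ℂ (SmithAlgebra f) c • v → ∃ a : ℂ, v = a • v₀) := by
  obtain ⟨u, hu⟩ := Polynomial.exists_taylor_one_sub_eq (2 * f)
  have simple_iff : IsSimpleModule (SmithAlgebra f) V ↔
      w ≠ 0 ∧ ∃ lam : ℂ, SmithOmega f u • w = lam • w := by
    refine ⟨fun _ => ?_, fun ⟨hw0, lam, hΩ⟩ => isSimpleModule hc hw hΩ hcyc hw0⟩
    have := IsSimpleModule.nontrivial (SmithAlgebra f) V
    exact ⟨ne_zero_of_nontrivial hcyc, exists_smul_smithOmega_of_isSimpleModule hcyc hu⟩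
  refine ⟨simple_iff.trans ⟨fun ⟨hw0, lam, hΩ⟩ => ?_, fun hmax => ?_⟩,
    simple_iff.trans ⟨fun ⟨hw0, lam, hΩ⟩ => ?_, fun ⟨v₀, hv₀, _, hspan⟩ => ?_⟩⟩
  · exact isMaximal_ker_smithCentralAction hcyc hc hw hΩ hw0
  · exact ⟨(ker_smithCentralAction_ne_top_iff hcyc).mp hmax.ne_top,
      exists_smul_smithOmega_of_isMaximal hcyc hu hmax⟩
  · exact ⟨w, hw0, hw, fun v hv => exists_eq_smul_of_isWhittakerVector hc hw hΩ hcyc hw0 hv⟩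
  · have : Nontrivial V := ⟨⟨v₀, 0, hv₀⟩⟩
    have hw0 := ne_zero_of_nontrivial hcyc
    exact ⟨hw0, exists_smul_smithOmega_of_forall_isWhittakerVector hu hw hw0 hspan⟩
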